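/- arXiv:2106.10761 — 5 statements merged into one kernel-verified Lean document; each statement's English description precedes it below -/
import Mathlib

section
/- Let (Ω, ℱ, P) be a probability space, let 𝒢 ⊆ ℱ be a sub-σ-algebra, let Z : Ω → ℝ^d be an integrable random vector, and let R : Ω → ℝ^d be a 𝒢-measurable random vector. Suppose φ : [0,∞) → [0,1] is a function such that P(‖R − Z‖ > t) ≤ φ(t) for every t ≥ 0, where ‖·‖ is the Euclidean norm. Then for every α > 0 and every c with 0 < c < α, P(‖R − E[Z | 𝒢]‖ > α) ≤ (1/c) · ∫_{α−c}^{∞} φ(t) dt, where E[Z | 𝒢] denotes the conditional expectation of Z given 𝒢. -/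
/-!
Write `g = ‖R - Z‖` and `b = α - c`. Since `R` is `𝒢`-measurable, `R - E[Z | 𝒢] = E[R - Z | 𝒢]`,
so conditional Jensen gives `‖R - E[Z | 𝒢]‖ ≤ E[g | 𝒢]`. On the `𝒢`-measurable event `A` where
the left side exceeds `α = b + c`, integrating `E[g | 𝒢] - b ≥ c` over `A` yields the conditional
Markov bound `c P(A) ≤ E[(g - b)⁺]`, and by the layer-cake formula
`E[(g - b)⁺] = ∫_b^∞ P(g > t) dt ≤ ∫_b^∞ φ`. The same layer-cake bound with `b = 0` makes `g`
integrable in the first place.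
-/

open MeasureTheory Set

section

variable {Ω : Type*} {m₀ : MeasurableSpace Ω} {μ : Measure Ω}

theorem ofReal_integral_le_lintegral_ofReal (f : Ω → ℝ) :
    ENNReal.ofReal (∫ ω, f ω ∂μ) ≤ ∫⁻ ω, ENNReal.ofReal (f ω) ∂μ := by
  by_cases hf : Integrable f μ
  · refine ENNReal.ofReal_le_of_le_toReal ?_
    rw [integral_eq_lintegral_pos_part_sub_lintegral_neg_part hf]
    exact sub_le_self _ ENNReal.toReal_nonneg
  · simp [integral_undef hf]

theorem lintegral_ofReal_sub_eq_lintegral_meas_lt {X : Ω → ℝ} (hX : AEMeasurable X μ) (b : ℝ) :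
    ∫⁻ ω, ENNReal.ofReal (X ω - b) ∂μ = ∫⁻ t in Ioi b, μ {ω | t < X ω} := by
  have hpos : ∫⁻ ω, ENNReal.ofReal (X ω - b) ∂μ = ∫⁻ ω, ENNReal.ofReal (max (X ω - b) 0) ∂μ := by
    simp only [ENNReal.ofReal_max, ENNReal.ofReal_zero, max_zero]
  rw [hpos, lintegral_eq_lintegral_meas_lt (f := fun ω => max (X ω - b) 0) μ
    (ae_of_all _ fun _ => le_max_right _ _) (by fun_prop),
    ← lintegral_indicator measurableSet_Ioi, ← lintegral_indicator measurableSet_Ioi]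
  conv_rhs => rw [← lintegral_add_right_eq_self _ b]
  congr 1 with t
  by_cases ht : 0 < t
  · simp [ht, not_lt.2 ht.le, lt_sub_iff_add_lt]
  · simp [ht]

theorem lintegral_ofReal_sub_le_of_meas_lt_le {X : Ω → ℝ} (hX : AEMeasurable X μ) {b : ℝ}
    {φ : ℝ → ℝ} (hφ0 : ∀ t, b < t → 0 ≤ φ t) (hφint : IntegrableOn φ (Ioi b))
    (hφ : ∀ t, b < t → μ {ω | t < X ω} ≤ ENNReal.ofReal (φ t)) :
    ∫⁻ ω, ENNReal.ofReal (X ω - b) ∂μ ≤ ENNReal.ofReal (∫ t in Ioi b, φ t) := by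
  rw [lintegral_ofReal_sub_eq_lintegral_meas_lt hX, ofReal_integral_eq_lintegral_ofReal hφint
    ((ae_restrict_iff' measurableSet_Ioi).2 (ae_of_all _ hφ0))]
  exact setLIntegral_mono' measurableSet_Ioi hφ

theorem integrable_of_meas_lt_le {X : Ω → ℝ} (hX : AEStronglyMeasurable X μ) (hX0 : 0 ≤ᵐ[μ] X)
    {φ : ℝ → ℝ} (hφ0 : ∀ t, 0 < t → 0 ≤ φ t) (hφint : IntegrableOn φ (Ioi 0))
    (hφ : ∀ t, 0 < t → μ {ω | t < X ω} ≤ ENNReal.ofReal (φ t)) :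
    Integrable X μ := by
  refine ⟨hX, (hasFiniteIntegral_iff_ofReal hX0).2 ?_⟩
  have h := lintegral_ofReal_sub_le_of_meas_lt_le hX.aemeasurable hφ0 hφint hφ
  simp only [sub_zero] at h
  exact h.trans_lt ENNReal.ofReal_lt_top

theorem mul_measureReal_le_setIntegral_of_le_condExp {m : MeasurableSpace Ω} (hm : m ≤ m₀)
    [IsFiniteMeasure μ] {Y : Ω → ℝ} (hY : Integrable Y μ) {A : Set Ω} (hA : MeasurableSet[m] A)
    {c : ℝ} (hc : ∀ᵐ ω ∂μ, ω ∈ A → c ≤ μ[Y|m] ω) :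
    c * μ.real A ≤ ∫ ω in A, Y ω ∂μ := by
  rw [← setIntegral_condExp hm hY hA, mul_comm, ← smul_eq_mul, ← setIntegral_const]
  exact setIntegral_mono_ae_restrict (integrableOn_const (measure_ne_top μ A))
    integrable_condExp.integrableOn ((ae_restrict_iff' (hm A hA)).2 hc)

theorem ofReal_mul_measureReal_le_lintegral_ofReal_sub {m : MeasurableSpace Ω} (hm : m ≤ m₀)
    [IsFiniteMeasure μ] {Y : Ω → ℝ} (hY : Integrable Y μ) {A : Set Ω} (hA : MeasurableSet[m] A)
    {b c : ℝ} (hc : ∀ᵐ ω ∂μ, ω ∈ A → b + c ≤ μ[Y|m] ω) :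
    ENNReal.ofReal (c * μ.real A) ≤ ∫⁻ ω, ENNReal.ofReal (Y ω - b) ∂μ := by
  have hmarkov := mul_measureReal_le_setIntegral_of_le_condExp hm hY hA hc
  have hsub : c * μ.real A ≤ ∫ ω in A, (Y ω - b) ∂μ := by
    rw [integral_sub hY.integrableOn (integrableOn_const (measure_ne_top μ A)), setIntegral_const,
      smul_eq_mul]
    linarith
  calc ENNReal.ofReal (c * μ.real A) ≤ ENNReal.ofReal (∫ ω in A, (Y ω - b) ∂μ) :=
        ENNReal.ofReal_le_ofReal hsub
    _ ≤ ∫⁻ ω in A, ENNReal.ofReal (Y ω - b) ∂μ := ofReal_integral_le_lintegral_ofReal _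
    _ ≤ ∫⁻ ω, ENNReal.ofReal (Y ω - b) ∂μ := setLIntegral_le_lintegral _ _

end

theorem sample_accuracy_implies_posterior_accuracy_general
    {Ω : Type*} {m₀ : MeasurableSpace Ω} (P : Measure Ω) [IsProbabilityMeasure P]
    (𝒢 : MeasurableSpace Ω) (h𝒢 : 𝒢 ≤ m₀) {d : ℕ}
    (Z R : Ω → EuclideanSpace ℝ (Fin d))
    (hZ : Integrable Z P)
    (hR : StronglyMeasurable[𝒢] R)
    (φ : ℝ → ℝ)
    (hφ0 : ∀ t, 0 ≤ t → 0 ≤ φ t)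
    (hφint : IntegrableOn φ (Set.Ioi 0))
    (hφ : ∀ t, 0 ≤ t → P {ω | t < ‖R ω - Z ω‖} ≤ ENNReal.ofReal (φ t))
    (α c : ℝ) (hc : 0 < c) (hcα : c < α) :
    P {ω | α < ‖R ω - (P[Z|𝒢]) ω‖}
      ≤ ENNReal.ofReal ((1 / c) * ∫ t in Set.Ioi (α - c), φ t) := by
  set A := {ω | α < ‖R ω - (P[Z|𝒢]) ω‖}
  have hRZ : AEStronglyMeasurable[m₀] (fun ω => R ω - Z ω) P :=
    (hR.mono h𝒢).aestronglyMeasurable.sub hZ.1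
  have hg : Integrable (fun ω => ‖R ω - Z ω‖) P :=
    integrable_of_meas_lt_le hRZ.norm (ae_of_all _ fun _ => norm_nonneg _)
      (fun t ht => hφ0 t ht.le) hφint (fun t ht => hφ t ht.le)
  have hR_int : Integrable R P :=
    (((integrable_norm_iff hRZ).1 hg).add hZ).congr
      (ae_of_all _ fun ω => sub_add_cancel (R ω) (Z ω))
  have hjensen : ∀ᵐ ω ∂P, ‖R ω - (P[Z|𝒢]) ω‖ ≤ (P[fun ω => ‖R ω - Z ω‖|𝒢]) ω := by
    filter_upwards [norm_condExp_le (μ := P) (m := 𝒢) (R - Z),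
      condExp_sub hR_int hZ 𝒢] with ω hω hsub
    rwa [hsub, Pi.sub_apply, condExp_of_stronglyMeasurable h𝒢 hR hR_int] at hω
  have hA : MeasurableSet[𝒢] A :=
    measurableSet_lt measurable_const (hR.sub stronglyMeasurable_condExp).norm.measurable
  have hb : 0 ≤ α - c := by linarith
  have hI : 0 ≤ ∫ t in Ioi (α - c), φ t :=
    setIntegral_nonneg measurableSet_Ioi fun t ht => hφ0 t (hb.trans ht.le)
  have hbound : c * P.real A ≤ ∫ t in Ioi (α - c), φ t := by
    rw [← ENNReal.ofReal_le_ofReal_iff hI]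
    refine (ofReal_mul_measureReal_le_lintegral_ofReal_sub h𝒢 hg hA ?_).trans
      (lintegral_ofReal_sub_le_of_meas_lt_le hg.aemeasurable
        (fun t ht => hφ0 t (hb.trans ht.le)) (hφint.mono_set (Ioi_subset_Ioi hb))
        (fun t ht => hφ t (hb.trans ht.le)))
    filter_upwards [hjensen] with ω hω hωA
    linarith [hωA.out.trans_le hω]
  rw [ENNReal.le_ofReal_iff_toReal_le (measure_ne_top P A) (by positivity), one_div_mul_eq_div,
    le_div_iff₀' hc]
  exact hbound

/-- **Sample Accuracy implies Posterior Accuracy** (Lemma 3.1, abstract form).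
If `P(‖R − Z‖ > t) ≤ φ(t)` for all `t ≥ 0`, with `R` measurable with respect to a
sub-σ-algebra `𝒢`, then for `0 < c < α`,
`P(‖R − E[Z | 𝒢]‖ > α) ≤ (1/c) ∫_{α−c}^{∞} φ(t) dt`. -/
theorem sample_accuracy_implies_posterior_accuracy
    {Ω : Type*} {m₀ : MeasurableSpace Ω} (P : Measure Ω) [IsProbabilityMeasure P]
    (𝒢 : MeasurableSpace Ω) (h𝒢 : 𝒢 ≤ m₀) {d : ℕ}
    (Z R : Ω → EuclideanSpace ℝ (Fin d))
    (hZ : Integrable Z P)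
    (hR : StronglyMeasurable[𝒢] R)
    (φ : ℝ → ℝ)
    (hφ0 : ∀ t, 0 ≤ t → 0 ≤ φ t) (hφ1 : ∀ t, 0 ≤ t → φ t ≤ 1)
    (hφint : IntegrableOn φ (Set.Ioi 0))
    (hφ : ∀ t, 0 ≤ t → P {ω | t < ‖R ω - Z ω‖} ≤ ENNReal.ofReal (φ t))
    (α c : ℝ) (hα : 0 < α) (hc : 0 < c) (hcα : c < α) :
    P {ω | α < ‖R ω - (P[Z|𝒢]) ω‖}
      ≤ ENNReal.ofReal ((1 / c) * ∫ t in Set.Ioi (α - c), φ t) :=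
  sample_accuracy_implies_posterior_accuracy_general P 𝒢 h𝒢 Z R hZ hR φ hφ0 hφint hφ α c hc hcα
end

section
/- Let η > 0 and k ∈ ℕ, and define φ(t) := k·P(|ξ| > t) for t ≥ 0, where ξ is a centered Gaussian random variable with variance η². Then for every α ≥ √2·η, taking c = α − √(α² − 2η²) ∈ (0, α), one has (1/c)·∫_{α−c}^{∞} φ(t) dt ≤ (k·α/(√(2π)·η))·e^{1 − α²/(2η²)}. -/
/-!
Let `f` be the density of `N(0, η²)` and `Q t = ∫_t^∞ f` its tail. Then `P(|ξ| > t) = 2 Q t`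
for `t ≥ 0`, and integrating by parts with `x f = -η² f'` gives `∫_β^∞ Q = η² f β - β Q β`.
With `β = √(α² - 2η²) = α - c` one has `f β = e^{1 - α²/(2η²)} / (√(2π) η)` and
`2η² - β c = α c`, so the claim reduces to the Mills-ratio bound
`Q β ≥ (√(β² + 2η²) - β) f β / 2 = c f β / 2`. That bound holds at every `t`:
`g = (√(t² + 2η²) - t) f / 2` vanishes at infinity and `g' ≥ -f`, so `Q - g` decreases to `0`.
-/

open MeasureTheory Real ProbabilityTheory Filter Set Topology NNReal

section TailIntegral

variable {f : ℝ → ℝ}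

theorem integral_Ioi_eq_sub_intervalIntegral (hfi : Integrable f) (a t : ℝ) :
    ∫ x in Ioi t, f x = (∫ x in Ioi a, f x) - ∫ x in a..t, f x := by
  linarith [intervalIntegral.integral_Ioi_sub_Ioi' hfi.integrableOn hfi.integrableOn (a := a)
    (b := t)]

theorem hasDerivAt_integral_Ioi (hf : Continuous f) (hfi : Integrable f) (t : ℝ) :
    HasDerivAt (fun t ↦ ∫ x in Ioi t, f x) (-f t) t := by
  rw [funext (integral_Ioi_eq_sub_intervalIntegral hfi 0)]
  exact (intervalIntegral.integral_hasDerivAt_right (hf.intervalIntegrable 0 t)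
    hf.aestronglyMeasurable.stronglyMeasurableAtFilter hf.continuousAt).const_sub
    (∫ x in Ioi 0, f x)

theorem tendsto_integral_Ioi_atTop (hfi : Integrable f) :
    Tendsto (fun t ↦ ∫ x in Ioi t, f x) atTop (𝓝 0) := by
  rw [funext (integral_Ioi_eq_sub_intervalIntegral hfi 0)]
  simpa using (intervalIntegral_tendsto_integral_Ioi 0 hfi.integrableOn tendsto_id).const_sub
    (∫ x in Ioi 0, f x)

theorem le_integral_Ioi_of_neg_le_deriv {g g' : ℝ → ℝ} {a : ℝ} (hf : Continuous f)
    (hfi : Integrable f) (hg : ∀ x ∈ Ici a, HasDerivAt g (g' x) x)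
    (hg' : ∀ x ∈ Ioi a, -f x ≤ g' x) (hlim : Tendsto g atTop (𝓝 0)) :
    g a ≤ ∫ x in Ioi a, f x := by
  have key := integral_Ioi_of_hasDerivAt_of_nonneg'
    (fun x hx ↦ (hg x hx).sub (hasDerivAt_integral_Ioi hf hfi x))
    (fun x hx ↦ by linarith [hg' x hx])
    (by simpa using hlim.sub (tendsto_integral_Ioi_atTop hfi) :
      Tendsto (fun x ↦ g x - ∫ y in Ioi x, f y) atTop (𝓝 0))
  have : 0 ≤ ∫ x in Ioi a, (g' x - -f x) :=
    setIntegral_nonneg measurableSet_Ioi fun x hx ↦ by linarith [hg' x hx]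
  simp only [Pi.sub_apply] at key
  linarith

end TailIntegral

theorem hasDerivAt_sqrt_sq_add {c : ℝ} (hc : 0 < c) (x : ℝ) :
    HasDerivAt (fun x ↦ √(x ^ 2 + c)) (x / √(x ^ 2 + c)) x := by
  refine ((hasDerivAt_pow 2 x).add_const c).sqrt (by positivity) |>.congr_deriv ?_
  field_simp
  norm_num

section GaussianTail

variable {v : ℝ≥0}

theorem hasDerivAt_gaussianPDFReal (x : ℝ) :
    HasDerivAt (gaussianPDFReal 0 v) (-(x / v) * gaussianPDFReal 0 v x) x := by
  have hexponent : HasDerivAt (fun y : ℝ ↦ -(y - 0) ^ 2 / (2 * v)) (-(2 * x) / (2 * v)) x := by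
    simpa using (hasDerivAt_pow 2 x).neg.div_const (2 * (v : ℝ))
  refine (hexponent.exp.const_mul (√(2 * π * v))⁻¹).congr_deriv ?_
  rw [gaussianPDFReal]
  ring

theorem continuous_gaussianPDFReal : Continuous (gaussianPDFReal 0 v) :=
  continuous_iff_continuousAt.2 fun x ↦ (hasDerivAt_gaussianPDFReal x).continuousAt

theorem tendsto_gaussianPDFReal_atTop (hv : v ≠ 0) :
    Tendsto (gaussianPDFReal 0 v) atTop (𝓝 0) := by
  have hexp : Tendsto (fun x : ℝ ↦ rexp (-(x - 0) ^ 2 / (2 * v))) atTop (𝓝 0) :=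
    tendsto_exp_atBot.comp <| (tendsto_neg_atTop_atBot.comp <| (tendsto_pow_atTop two_ne_zero).comp
      (tendsto_atTop_add_const_right _ _ tendsto_id)).atBot_div_const (by positivity)
  rw [gaussianPDFReal_def]
  simpa using hexp.const_mul (√(2 * π * v))⁻¹

theorem integrable_mul_gaussianPDFReal (hv : v ≠ 0) :
    Integrable (fun x ↦ x * gaussianPDFReal 0 v x) := by
  refine ((integrable_mul_exp_neg_mul_sq (b := 1 / (2 * v)) (by positivity)).const_mul
    (√(2 * π * v))⁻¹).congr (.of_forall fun x ↦ ?_)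
  simp only [gaussianPDFReal]
  ring_nf

theorem integral_Ioi_mul_gaussianPDFReal (hv : v ≠ 0) (t : ℝ) :
    ∫ x in Ioi t, x * gaussianPDFReal 0 v x = v * gaussianPDFReal 0 v t := by
  have hderiv (x : ℝ) : HasDerivAt (fun y ↦ -v * gaussianPDFReal 0 v y)
      (x * gaussianPDFReal 0 v x) x := by
    refine ((hasDerivAt_gaussianPDFReal x).const_mul _).congr_deriv ?_
    field_simp
  rw [integral_Ioi_of_hasDerivAt_of_tendsto' (fun x _ ↦ hderiv x)
    (integrable_mul_gaussianPDFReal hv).integrableOn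
    (by simpa using (tendsto_gaussianPDFReal_atTop hv).const_mul (-(v : ℝ)))]
  ring

variable (v) in
noncomputable def gaussianTail (t : ℝ) : ℝ := ∫ x in Ioi t, gaussianPDFReal 0 v x

theorem gaussianTail_nonneg (t : ℝ) : 0 ≤ gaussianTail v t :=
  setIntegral_nonneg measurableSet_Ioi fun x _ ↦ gaussianPDFReal_nonneg 0 v x

theorem hasDerivAt_gaussianTail (t : ℝ) :
    HasDerivAt (gaussianTail v) (-gaussianPDFReal 0 v t) t :=
  hasDerivAt_integral_Ioi continuous_gaussianPDFReal (integrable_gaussianPDFReal 0 v) t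

theorem mul_gaussianTail_le (hv : v ≠ 0) (t : ℝ) :
    t * gaussianTail v t ≤ v * gaussianPDFReal 0 v t := by
  rw [← integral_Ioi_mul_gaussianPDFReal hv, gaussianTail, ← integral_const_mul]
  refine setIntegral_mono_on ((integrable_gaussianPDFReal 0 v).const_mul t).integrableOn
    (integrable_mul_gaussianPDFReal hv).integrableOn measurableSet_Ioi fun x hx ↦ ?_
  exact mul_le_mul_of_nonneg_right (le_of_lt hx) (gaussianPDFReal_nonneg 0 v x)

theorem tendsto_mul_gaussianTail_atTop (hv : v ≠ 0) :
    Tendsto (fun t ↦ t * gaussianTail v t) atTop (𝓝 0) := by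
  refine squeeze_zero' ?_ ?_ (by simpa using (tendsto_gaussianPDFReal_atTop hv).const_mul (v : ℝ))
  · filter_upwards [eventually_ge_atTop 0] with t ht
    exact mul_nonneg ht (gaussianTail_nonneg t)
  · filter_upwards [eventually_ge_atTop 0] with t ht
    exact mul_gaussianTail_le hv t

theorem integral_Ioi_gaussianTail (hv : v ≠ 0) (a : ℝ) :
    ∫ t in Ioi a, gaussianTail v t = v * gaussianPDFReal 0 v a - a * gaussianTail v a := by
  have hderiv (t : ℝ) : HasDerivAt (fun t ↦ t * gaussianTail v t - v * gaussianPDFReal 0 v t)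
      (gaussianTail v t) t := by
    refine (((hasDerivAt_id' t).mul (hasDerivAt_gaussianTail t)).sub
      ((hasDerivAt_gaussianPDFReal t).const_mul (v : ℝ))).congr_deriv ?_
    field_simp
    ring
  have hlim : Tendsto (fun t ↦ t * gaussianTail v t - v * gaussianPDFReal 0 v t) atTop (𝓝 0) := by
    simpa using (tendsto_mul_gaussianTail_atTop hv).sub
      ((tendsto_gaussianPDFReal_atTop hv).const_mul (v : ℝ))
  rw [integral_Ioi_of_hasDerivAt_of_nonneg' (fun t _ ↦ hderiv t)
    (fun t _ ↦ gaussianTail_nonneg t) hlim]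
  ring

theorem sqrt_sub_mul_gaussianPDFReal_le_gaussianTail (hv : v ≠ 0) (t : ℝ) :
    (√(t ^ 2 + 2 * v) - t) / 2 * gaussianPDFReal 0 v t ≤ gaussianTail v t := by
  have hv0 : (0 : ℝ) < v := by positivity
  have hsq (x : ℝ) : √(x ^ 2 + 2 * v) ^ 2 = x ^ 2 + 2 * v := Real.sq_sqrt (by positivity)
  have hsqrt_gt (x : ℝ) : x < √(x ^ 2 + 2 * v) := by
    nlinarith [hsq x, Real.sqrt_pos.2 (by positivity : 0 < x ^ 2 + 2 * (v : ℝ))]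
  have hderiv (x : ℝ) : HasDerivAt (fun x ↦ (√(x ^ 2 + 2 * v) - x) / 2 * gaussianPDFReal 0 v x)
      ((x / √(x ^ 2 + 2 * v) - 1) / 2 * gaussianPDFReal 0 v x +
        (√(x ^ 2 + 2 * v) - x) / 2 * (-(x / v) * gaussianPDFReal 0 v x)) x :=
    (((hasDerivAt_sqrt_sq_add (by positivity) x).sub (hasDerivAt_id' x)).div_const 2).mul
      (hasDerivAt_gaussianPDFReal x)
  refine le_integral_Ioi_of_neg_le_deriv continuous_gaussianPDFReal
    (integrable_gaussianPDFReal 0 v) (fun x _ ↦ hderiv x) (fun x _ ↦ ?_) ?_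
  · have hs2 := hsq x
    have hsx := sub_pos.2 (hsqrt_gt x)
    set s := √(x ^ 2 + 2 * v)
    have hs : 0 < s := by nlinarith
    -- with `r = (s - x) / 2`, the inequality `g' ≥ -f` reads `r' - x r / v + 1 ≥ 0`
    have hfactor : 0 ≤ (x / s - 1) / 2 + (s - x) / 2 * -(x / v) + 1 := by
      have : (x / s - 1) / 2 + (s - x) / 2 * -(x / v) + 1 =
          (s - x) * (v + x ^ 2) / (2 * v * s) := by
        field_simp
        linear_combination (-x) * hs2
      rw [this]
      positivity
    nlinarith [mul_nonneg hfactor (gaussianPDFReal_nonneg 0 v x)]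
  · have hlim : Tendsto (fun x ↦ √(2 * v) / 2 * gaussianPDFReal 0 v x) atTop (𝓝 0) := by
      simpa using (tendsto_gaussianPDFReal_atTop hv).const_mul (√(2 * v) / 2)
    refine squeeze_zero' (.of_forall fun x ↦ mul_nonneg (by linarith [hsqrt_gt x])
      (gaussianPDFReal_nonneg 0 v x)) ?_ hlim
    filter_upwards [eventually_ge_atTop 0] with x hx
    have : √(x ^ 2 + 2 * v) ≤ x + √(2 * v) := Real.sqrt_le_iff.2 ⟨by positivity,
      by nlinarith [Real.sq_sqrt (by positivity : (0 : ℝ) ≤ 2 * v), Real.sqrt_nonneg (2 * v)]⟩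
    exact mul_le_mul_of_nonneg_right (by linarith) (gaussianPDFReal_nonneg 0 v x)

theorem measureReal_gaussianReal_Ioi (hv : v ≠ 0) (t : ℝ) :
    (gaussianReal 0 v).real (Ioi t) = gaussianTail v t := by
  rw [measureReal_def, gaussianReal_apply_eq_integral 0 hv, ENNReal.toReal_ofReal]
  · rfl
  · exact gaussianTail_nonneg t

theorem toReal_gaussianReal_lt_abs (hv : v ≠ 0) {t : ℝ} (ht : 0 ≤ t) :
    (gaussianReal 0 v {x | t < |x|}).toReal = 2 * gaussianTail v t := by
  have hunion : {x : ℝ | t < |x|} = Iio (-t) ∪ Ioi t := by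
    ext x
    simp only [mem_ofPred_eq, mem_union, mem_Iio, mem_Ioi, lt_abs]
    constructor <;> rintro (h | h) <;> first | (left; linarith) | (right; linarith)
  have hsymm : (gaussianReal 0 v).real (Iio (-t)) = (gaussianReal 0 v).real (Ioi t) := by
    have h := gaussianReal_map_neg (μ := 0) (v := v)
    rw [neg_zero] at h
    conv_lhs => rw [← h, map_measureReal_apply measurable_neg measurableSet_Iio]
    congr 1
    ext x
    simp
  rw [← measureReal_def, hunion, measureReal_union ?_ measurableSet_Ioi, hsymm,
    measureReal_gaussianReal_Ioi hv]
  · ring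
  · exact disjoint_left.2 fun x (hx : x < -t) (hx' : t < x) ↦ by linarith

theorem integral_Ioi_toReal_gaussianReal_lt_abs (hv : v ≠ 0) {a : ℝ} (ha : 0 ≤ a) :
    ∫ t in Ioi a, (gaussianReal 0 v {x | t < |x|}).toReal =
      2 * (v * gaussianPDFReal 0 v a - a * gaussianTail v a) := by
  rw [setIntegral_congr_fun measurableSet_Ioi
    fun t ht ↦ toReal_gaussianReal_lt_abs hv (ha.trans (le_of_lt ht)),
    integral_const_mul, integral_Ioi_gaussianTail hv]

end GaussianTail

theorem gaussianPDFReal_zero_of_coe_eq_sq {v : ℝ≥0} {η : ℝ} (hη : 0 ≤ η)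
    (hv : (v : ℝ) = η ^ 2) (x : ℝ) :
    gaussianPDFReal 0 v x = (√(2 * π) * η)⁻¹ * rexp (-x ^ 2 / (2 * η ^ 2)) := by
  rw [gaussianPDFReal, hv, sub_zero, Real.sqrt_mul (by positivity), Real.sqrt_sq hη]

/-- **Posterior accuracy of the Gaussian mechanism** (Lemma 3.3, posterior-accuracy part,
analytic computation). For `φ(t) = k·P(|ξ| > t)` with `ξ ~ N(0, η²)`, every `α ≥ √2·η`,
and `c = α − √(α² − 2η²)`, one has
`(1/c) ∫_{α−c}^{∞} φ(t) dt ≤ (kα/(√(2π)η))·e^{1−α²/(2η²)}`. -/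
theorem gaussian_mechanism_posterior_accuracy
    (η : ℝ) (hη : 0 < η) (k : ℕ) (α : ℝ) (hα : Real.sqrt 2 * η ≤ α) :
    (1 / (α - Real.sqrt (α ^ 2 - 2 * η ^ 2))) *
        ∫ t in Set.Ioi (α - (α - Real.sqrt (α ^ 2 - 2 * η ^ 2))),
          (k : ℝ) * ((gaussianReal 0 ⟨η ^ 2, sq_nonneg η⟩) {x | t < |x|}).toReal
      ≤ (k * α / (Real.sqrt (2 * π) * η)) * Real.exp (1 - α ^ 2 / (2 * η ^ 2)) := by
  set v : ℝ≥0 := ⟨η ^ 2, sq_nonneg η⟩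
  have hvη : (v : ℝ) = η ^ 2 := rfl
  have hv : v ≠ 0 := fun h ↦ by simp [← NNReal.coe_eq_zero, hvη, hη.ne'] at h
  have hα0 : 0 < α := lt_of_lt_of_le (by positivity) hα
  have hα2 : 2 * η ^ 2 ≤ α ^ 2 := by
    nlinarith [mul_self_le_mul_self (by positivity) hα, Real.sq_sqrt zero_le_two]
  set β := √(α ^ 2 - 2 * η ^ 2)
  have hβ : 0 ≤ β := Real.sqrt_nonneg _
  have hβ2 : β ^ 2 = α ^ 2 - 2 * η ^ 2 := Real.sq_sqrt (by linarith)
  have hβα : β < α := (Real.sqrt_lt' hα0).2 (by linarith [pow_pos hη 2])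
  have hmills := sqrt_sub_mul_gaussianPDFReal_le_gaussianTail hv β
  rw [hvη, hβ2, sub_add_cancel, Real.sqrt_sq hα0.le] at hmills
  rw [sub_sub_cancel, integral_const_mul, integral_Ioi_toReal_gaussianReal_lt_abs hv hβ]
  calc 1 / (α - β) * (k * (2 * (v * gaussianPDFReal 0 v β - β * gaussianTail v β)))
      ≤ 1 / (α - β) * (k * (2 * (v * gaussianPDFReal 0 v β
          - β * ((α - β) / 2 * gaussianPDFReal 0 v β)))) := by
        have := sub_pos.2 hβα
        gcongr
    _ = k * α * gaussianPDFReal 0 v β := by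
        field_simp [(sub_pos.2 hβα).ne']
        linear_combination (k * gaussianPDFReal 0 v β) * hβ2
          + (2 * k * gaussianPDFReal 0 v β) * hvη
    _ = _ := by
        have hexponent : -β ^ 2 / (2 * η ^ 2) = 1 - α ^ 2 / (2 * η ^ 2) := by
          rw [hβ2]
          field_simp
          ring
        rw [gaussianPDFReal_zero_of_coe_eq_sq hη.le hvη, hexponent]
        ring
end

section
/- Let α, β ≥ 0 with α + β > 0, let R be a countable type, and let p₀, p₁ be probability mass functions on R such that p₀(r) ≤ e^{α+β}·p₁(r) for every r ∈ R (that is, the max divergence D_∞(p₀‖p₁) ≤ α + β). Then the mixture p' := ((e^β − 1)/(e^{α+β} − 1))·p₀ + ((e^{α+β} − e^β)/(e^{α+β} − 1))·p₁ is a probability mass function on R satisfying p₀(r) ≤ e^{α}·p'(r) and p'(r) ≤ e^{β}·p₁(r) for every r ∈ R; hence there exists a distribution p' with D_∞(p₀‖p') ≤ α and D_∞(p'‖p₁) ≤ β. -/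
/-! With `a = e^α`, `b = e^β` and `ab = e^{α+β}`, the mixture
`p' = ((b - 1) p₀ + (ab - b) p₁) / (ab - 1)` is a convex combination of `p₀` and `p₁`.
Clearing the denominator, `p₀ ≤ a p'` becomes `(a - 1) p₀ ≤ ab (a - 1) p₁` and `p' ≤ b p₁`
becomes `(b - 1) p₀ ≤ ab (b - 1) p₁`: both are the hypothesis `p₀ ≤ ab p₁` scaled by a
nonnegative factor. -/

section Interpolation

variable {a b x y : ℝ}

lemma interpolation_weights_add (hab : 1 < a * b) :
    (b - 1) / (a * b - 1) + (a * b - b) / (a * b - 1) = 1 := by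
  rw [← add_div, div_eq_one_iff_eq (by linarith)]
  ring

lemma interpolation_nonneg (ha : 1 ≤ a) (hb : 1 ≤ b) (hx : 0 ≤ x) (hy : 0 ≤ y) :
    0 ≤ (b - 1) / (a * b - 1) * x + (a * b - b) / (a * b - 1) * y := by
  have hden : 0 ≤ a * b - 1 := by nlinarith
  have hab_b : 0 ≤ a * b - b := by nlinarith
  exact add_nonneg (mul_nonneg (div_nonneg (by linarith) hden) hx)
    (mul_nonneg (div_nonneg hab_b hden) hy)

lemma le_mul_interpolation (ha : 1 ≤ a) (hab : 1 < a * b) (hxy : x ≤ a * b * y) :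
    x ≤ a * ((b - 1) / (a * b - 1) * x + (a * b - b) / (a * b - 1) * y) := by
  rw [div_mul_eq_mul_div, div_mul_eq_mul_div, ← add_div, mul_div_assoc',
    le_div_iff₀ (by linarith)]
  nlinarith [mul_le_mul_of_nonneg_left hxy (sub_nonneg.mpr ha)]

lemma interpolation_le_mul (hb : 1 ≤ b) (hab : 1 < a * b) (hxy : x ≤ a * b * y) :
    (b - 1) / (a * b - 1) * x + (a * b - b) / (a * b - 1) * y ≤ b * y := by
  rw [div_mul_eq_mul_div, div_mul_eq_mul_div, ← add_div, div_le_iff₀ (by linarith)]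
  nlinarith [mul_le_mul_of_nonneg_left hxy (sub_nonneg.mpr hb)]

end Interpolation

lemma summable_of_tsum_eq_one {R : Type*} {p : R → ℝ} (hp : ∑' r, p r = 1) : Summable p := by
  by_contra hns
  simp [tsum_eq_zero_of_not_summable hns] at hp

lemma tsum_smul_add_smul_of_tsum_eq_one {R : Type*} {p₀ p₁ : R → ℝ} (s t : ℝ)
    (hp₀ : ∑' r, p₀ r = 1) (hp₁ : ∑' r, p₁ r = 1) :
    ∑' r, (s * p₀ r + t * p₁ r) = s + t := by
  rw [(summable_of_tsum_eq_one hp₀).mul_left s |>.tsum_add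
      ((summable_of_tsum_eq_one hp₁).mul_left t), tsum_mul_left, tsum_mul_left, hp₀, hp₁,
    mul_one, mul_one]

theorem max_divergence_interpolation_general
    {R : Type*}
    (α β : ℝ) (hα : 0 ≤ α) (hβ : 0 ≤ β) (hαβ : 0 < α + β)
    (p₀ p₁ : R → ℝ)
    (hp₀0 : ∀ r, 0 ≤ p₀ r) (hp₁0 : ∀ r, 0 ≤ p₁ r)
    (hp₀1 : ∑' r, p₀ r = 1) (hp₁1 : ∑' r, p₁ r = 1)
    (hdiv : ∀ r, p₀ r ≤ Real.exp (α + β) * p₁ r) :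
    let p' : R → ℝ := fun r =>
      ((Real.exp β - 1) / (Real.exp (α + β) - 1)) * p₀ r
        + ((Real.exp (α + β) - Real.exp β) / (Real.exp (α + β) - 1)) * p₁ r
    (∀ r, 0 ≤ p' r) ∧ (∑' r, p' r = 1)
      ∧ (∀ r, p₀ r ≤ Real.exp α * p' r) ∧ (∀ r, p' r ≤ Real.exp β * p₁ r) := by
  intro p'
  have ha : 1 ≤ Real.exp α := Real.one_le_exp hα
  have hb : 1 ≤ Real.exp β := Real.one_le_exp hβ
  have hab : 1 < Real.exp α * Real.exp β := by rwa [← Real.exp_add, Real.one_lt_exp_iff]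
  simp only [p', Real.exp_add] at hdiv ⊢
  refine ⟨fun r => interpolation_nonneg ha hb (hp₀0 r) (hp₁0 r), ?_,
    fun r => le_mul_interpolation ha hab (hdiv r), fun r => interpolation_le_mul hb hab (hdiv r)⟩
  rw [tsum_smul_add_smul_of_tsum_eq_one _ _ hp₀1 hp₁1, interpolation_weights_add hab]

/-- **Max divergence interpolation** (Lemma D.3).
If `p₀(r) ≤ e^{α+β}·p₁(r)` for all `r`, then the explicit mixture `p'` is a probability
mass function with `p₀(r) ≤ e^{α}·p'(r)` and `p'(r) ≤ e^{β}·p₁(r)` for all `r`. -/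
theorem max_divergence_interpolation
    {R : Type*} [Countable R]
    (α β : ℝ) (hα : 0 ≤ α) (hβ : 0 ≤ β) (hαβ : 0 < α + β)
    (p₀ p₁ : R → ℝ)
    (hp₀0 : ∀ r, 0 ≤ p₀ r) (hp₁0 : ∀ r, 0 ≤ p₁ r)
    (hp₀1 : ∑' r, p₀ r = 1) (hp₁1 : ∑' r, p₁ r = 1)
    (hdiv : ∀ r, p₀ r ≤ Real.exp (α + β) * p₁ r) :
    let p' : R → ℝ := fun r =>
      ((Real.exp β - 1) / (Real.exp (α + β) - 1)) * p₀ r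
        + ((Real.exp (α + β) - Real.exp β) / (Real.exp (α + β) - 1)) * p₁ r
    (∀ r, 0 ≤ p' r) ∧ (∑' r, p' r = 1)
      ∧ (∀ r, p₀ r ≤ Real.exp α * p' r) ∧ (∀ r, p' r ≤ Real.exp β * p₁ r) :=
  max_divergence_interpolation_general α β hα hβ hαβ p₀ p₁ hp₀0 hp₁0 hp₀1 hp₁1 hdiv
end

section
/- Let (Ω, ℱ, P) be a probability space with a filtration ∅ = ℱ₀ ⊆ ℱ₁ ⊆ … ⊆ ℱ_k = ℱ. For each i ∈ {1,…,k} let X_i, A_i, B_i be real-valued random variables such that X_i is ℱ_i-measurable, A_i and B_i are ℱ_{i−1}-measurable, E[X_i | ℱ_{i−1}] = 0, and A_i ≤ X_i ≤ B_i almost surely. Let Y_k := ∑_{i=1}^{k} X_i. Then for all ε₁, ε₂ > 0, P( Y_k ≥ ε₁ and ∑_{i=1}^{k}(B_i − A_i)² ≤ ε₂² ) ≤ exp(−2·(ε₁/ε₂)²). -/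
/-!
Conditionally on `ℱ (i - 1)`, the increment `X i` is centred and lies in `[A i, B i]`, which
forces `A i ≤ 0 ≤ B i`. Bounding `exp (t * X i)` by its chord over `[A i, B i]` and applying
Hoeffding's lemma to the centred two-point law on `{A i, B i}` gives
`E[exp (t X_i) | ℱ (i - 1)] ≤ exp (t² (B_i - A_i)² / 8)`, so
`exp (∑ (t X_i - t² (B_i - A_i)² / 8))` has expectation at most `1`.

The ranges are only predictable, so the increments are first stopped (multiplied by the
predictable indicator that the running sum of `(B_j - A_j)²` is still at most `ε₂²`). This does
not change `Y_k` on the event in question and makes `∑ (B_i - A_i)² ≤ ε₂²` hold surely, so the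
stopped sum is sub-Gaussian with variance proxy `ε₂² / 4`, and the sub-Gaussian Chernoff bound
gives `exp (-2 (ε₁ / ε₂)²)`.
-/

open MeasureTheory ProbabilityTheory Real

lemma coe_nnnorm_div_two_sq (c : ℝ) : (((‖c‖₊ / 2) ^ 2 : NNReal) : ℝ) = c ^ 2 / 4 := by
  push_cast
  rw [Real.norm_eq_abs, div_pow, sq_abs]
  norm_num

/-- The chord of `u ↦ exp (t * u)` over `[a, b]`, evaluated at `x`; for `a = b` its slope is the
junk value `0`. -/
noncomputable def expChord (t a b x : ℝ) : ℝ :=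
  exp (t * a) + (exp (t * b) - exp (t * a)) / (b - a) * (x - a)

lemma expChord_eq {t a b x : ℝ} (hab : a < b) :
    expChord t a b x = (b - x) / (b - a) * exp (t * a) + (x - a) / (b - a) * exp (t * b) := by
  have : b - a ≠ 0 := by linarith
  unfold expChord
  field_simp
  ring

lemma exp_mul_le_expChord {t a b x : ℝ} (hax : a ≤ x) (hxb : x ≤ b) :
    exp (t * x) ≤ expChord t a b x := by
  rcases hax.eq_or_lt with rfl | hax
  · simp [expChord]
  have hab : 0 < b - a := by linarith
  have h := convexOn_exp.2 (Set.mem_univ (t * a)) (Set.mem_univ (t * b))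
    (div_nonneg (sub_nonneg.2 hxb) hab.le) (div_nonneg (sub_nonneg.2 hax.le) hab.le)
    (by field_simp; ring)
  rw [expChord_eq (hax.trans_le hxb)]
  calc exp (t * x) = exp (((b - x) / (b - a)) • (t * a) + ((x - a) / (b - a)) • (t * b)) := by
        congr 1; simp only [smul_eq_mul]; field_simp [hab.ne']; ring
    _ ≤ _ := h

lemma expChord_le_max {t a b x : ℝ} (hax : a ≤ x) (hxb : x ≤ b) :
    expChord t a b x ≤ max (exp (t * a)) (exp (t * b)) := by
  rcases hax.eq_or_lt with rfl | hax
  · simp [expChord]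
  have hab : 0 < b - a := by linarith
  rw [expChord_eq (hax.trans_le hxb)]
  calc _ ≤ (b - x) / (b - a) * max (exp (t * a)) (exp (t * b))
        + (x - a) / (b - a) * max (exp (t * a)) (exp (t * b)) := by
        have : 0 ≤ b - x := by linarith
        gcongr
        · exact le_max_left _ _
        · exact le_max_right _ _
    _ = max (exp (t * a)) (exp (t * b)) := by field_simp; ring

/-- Hoeffding's lemma for the centred law on `{a, b}`, whose moment generating function at `t`
is `expChord t a b 0`. -/
lemma expChord_zero_le {t a b : ℝ} (ha : a ≤ 0) (hb : 0 ≤ b) :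
    expChord t a b 0 ≤ exp (t ^ 2 * (b - a) ^ 2 / 8) := by
  rcases (ha.trans hb).eq_or_lt with rfl | hab
  · obtain rfl : a = 0 := le_antisymm ha hb
    simp [expChord]
  have hba : 0 < b - a := by linarith
  set p : unitInterval := ⟨-a / (b - a), div_nonneg (by linarith) hba.le,
    (div_le_one hba).2 (by linarith)⟩
  have hp : (p : ℝ) = -a / (b - a) := rfl
  have hsupp : ∀ᵐ x ∂Ber(b, a, p), x ∈ Set.Icc a b := by
    rw [ae_iff]
    exact bernoulliMeasure_apply_of_notMem_of_notMem p measurableSet_Icc.compl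
      (by simp [hab.le]) (by simp [hab.le])
  have hmean : ∫ x, id x ∂Ber(b, a, p) = 0 := by
    rw [integral_bernoulliMeasure, hp]; simp; field_simp; ring
  convert (hasSubgaussianMGF_of_mem_Icc_of_integral_eq_zero aemeasurable_id hsupp hmean).mgf_le t
    using 1
  · rw [mgf, integral_bernoulliMeasure, hp, expChord_eq hab]; simp; field_simp; ring
  · rw [coe_nnnorm_div_two_sq]; congr 1; ring

lemma exp_mul_le_exp_abs_mul {t u C : ℝ} (hu : |u| ≤ C) : exp (t * u) ≤ exp (|t| * C) :=
  exp_le_exp.2 <| (le_abs_self _).trans <| by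
    rw [abs_mul]; exact mul_le_mul_of_nonneg_left hu (abs_nonneg t)

lemma integrable_exp_mul_of_abs_le {Ω : Type*} {m₀ : MeasurableSpace Ω} {P : Measure Ω}
    [IsFiniteMeasure P] {W : Ω → ℝ} (hW : AEMeasurable W P) {C : ℝ} (hC : ∀ᵐ ω ∂P, |W ω| ≤ C)
    (t : ℝ) : Integrable (fun ω => exp (t * W ω)) P := by
  refine .of_bound (hW.const_mul t).exp.aestronglyMeasurable (exp (|t| * C)) ?_
  filter_upwards [hC] with ω h
  simpa using exp_mul_le_exp_abs_mul h

lemma integral_mul_le_of_condExp_le {Ω : Type*} {G m₀ : MeasurableSpace Ω} {P : Measure Ω}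
    (hG : G ≤ m₀) [SigmaFinite (P.trim hG)] {F g h : Ω → ℝ} (hF : StronglyMeasurable[G] F)
    (hF0 : 0 ≤ F) (hg : Integrable g P) (hFg : Integrable (F * g) P)
    (hFh : Integrable (F * h) P) (hgh : P[g | G] ≤ᵐ[P] h) :
    ∫ ω, F ω * g ω ∂P ≤ ∫ ω, F ω * h ω ∂P := by
  rw [← integral_condExp hG]
  refine integral_mono_ae integrable_condExp hFh ?_
  filter_upwards [condExp_mul_of_stronglyMeasurable_left hF hFg hg, hgh] with ω heq hle
  exact heq.trans_le (mul_le_mul_of_nonneg_left hle (hF0 ω))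

section ConditionalHoeffding

variable {Ω : Type*} {G m₀ : MeasurableSpace Ω} {P : Measure Ω} [IsFiniteMeasure P]
  {W A B : Ω → ℝ}

lemma ae_nonpos_of_le_of_condExp_eq_zero (hG : G ≤ m₀) (hW : Integrable W P)
    (hcond : P[W | G] =ᵐ[P] 0) (hA : Measurable[G] A) (hAW : ∀ᵐ ω ∂P, A ω ≤ W ω) :
    ∀ᵐ ω ∂P, A ω ≤ 0 := by
  set S := {ω | 0 < A ω}
  have hS : MeasurableSet[G] S := hA measurableSet_Ioi
  have hW_zero : W =ᵐ[P.restrict S] 0 := by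
    refine (setIntegral_eq_zero_iff_of_nonneg_ae ?_ hW.integrableOn).1 ?_
    · exact (ae_restrict_iff' (hG S hS)).2 (hAW.mono fun ω h hω => (le_of_lt hω).trans h)
    · rw [← setIntegral_condExp hG hW hS, setIntegral_congr_ae (hG S hS)
        (hcond.mono fun _ h _ => h)]
      simp
  have hW_pos : ∀ᵐ ω ∂P.restrict S, 0 < W ω :=
    (ae_restrict_iff' (hG S hS)).2 (hAW.mono fun ω h hω => hω.trans_le h)
  have hPS : P S = 0 := by
    rw [← Measure.restrict_eq_zero, ← ae_eq_bot, ← Filter.eventually_false_iff_eq_bot]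
    filter_upwards [hW_zero, hW_pos] with ω h0 hpos
    simp [h0] at hpos
  filter_upwards [measure_eq_zero_iff_ae_notMem.1 hPS] with ω hω
  simpa [S] using hω

lemma ae_nonpos_and_nonneg_of_condExp_eq_zero (hG : G ≤ m₀) (hW : Integrable W P)
    (hcond : P[W | G] =ᵐ[P] 0) (hA : Measurable[G] A) (hB : Measurable[G] B)
    (hAWB : ∀ᵐ ω ∂P, A ω ≤ W ω ∧ W ω ≤ B ω) :
    ∀ᵐ ω ∂P, A ω ≤ 0 ∧ 0 ≤ B ω := by
  have hA0 := ae_nonpos_of_le_of_condExp_eq_zero hG hW hcond hA (hAWB.mono fun _ h => h.1)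
  have hcond_neg : P[-W | G] =ᵐ[P] 0 :=
    (condExp_neg W G).trans (hcond.mono fun ω h => by simp [h])
  have hB0 := ae_nonpos_of_le_of_condExp_eq_zero hG hW.neg hcond_neg hB.neg
    (hAWB.mono fun _ h => neg_le_neg h.2)
  filter_upwards [hA0, hB0] with ω hA hB
  exact ⟨hA, by simpa using hB⟩

lemma condExp_expChord (hG : G ≤ m₀) (hW : Integrable W P) (hcond : P[W | G] =ᵐ[P] 0)
    (hA : Measurable[G] A) (hB : Measurable[G] B) (hA_int : Integrable A P) {t : ℝ}
    (hexpA : Integrable (fun ω => exp (t * A ω)) P)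
    (hL : Integrable (fun ω => expChord t (A ω) (B ω) (W ω)) P) :
    P[fun ω => expChord t (A ω) (B ω) (W ω) | G] =ᵐ[P] fun ω => expChord t (A ω) (B ω) 0 := by
  set β : Ω → ℝ := fun ω => (exp (t * B ω) - exp (t * A ω)) / (B ω - A ω)
  have hβ : StronglyMeasurable[G] β :=
    (((hB.const_mul t).exp.sub (hA.const_mul t).exp).div (hB.sub hA)).stronglyMeasurable
  have hexpA_eq : P[fun ω => exp (t * A ω) | G] = fun ω => exp (t * A ω) :=
    condExp_of_stronglyMeasurable hG (hA.const_mul t).exp.stronglyMeasurable hexpA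
  have hL_eq :
      (fun ω => expChord t (A ω) (B ω) (W ω)) = (fun ω => exp (t * A ω)) + β * (W - A) :=
    rfl
  have hβ_int : Integrable (β * (W - A)) P := by
    simpa [hL_eq] using hL.sub hexpA
  rw [hL_eq]
  filter_upwards [condExp_add hexpA hβ_int G,
    condExp_mul_of_stronglyMeasurable_left hβ hβ_int (hW.sub hA_int),
    condExp_sub hW hA_int G, hcond] with ω h_add h_mul h_sub h0
  rw [h_add, Pi.add_apply, h_mul, hexpA_eq, Pi.mul_apply, h_sub, Pi.sub_apply, h0,
    condExp_of_stronglyMeasurable hG hA.stronglyMeasurable hA_int]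
  simp [expChord, β]

lemma condExp_exp_mul_le (hG : G ≤ m₀) (hW : Integrable W P) (hcond : P[W | G] =ᵐ[P] 0)
    (hA : Measurable[G] A) (hB : Measurable[G] B) (hAWB : ∀ᵐ ω ∂P, A ω ≤ W ω ∧ W ω ≤ B ω)
    {C : ℝ} (hC : ∀ᵐ ω ∂P, -C ≤ A ω ∧ B ω ≤ C) (t : ℝ) :
    P[fun ω => exp (t * W ω) | G] ≤ᵐ[P] fun ω => exp (t ^ 2 * (B ω - A ω) ^ 2 / 8) := by
  have hAm : Measurable A := hA.mono hG le_rfl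
  have hBm : Measurable B := hB.mono hG le_rfl
  have hA_abs : ∀ᵐ ω ∂P, |A ω| ≤ C := by
    filter_upwards [hAWB, hC] with ω h hC
    exact abs_le.2 ⟨hC.1, h.1.trans (h.2.trans hC.2)⟩
  have hB_abs : ∀ᵐ ω ∂P, |B ω| ≤ C := by
    filter_upwards [hAWB, hC] with ω h hC
    exact abs_le.2 ⟨hC.1.trans (h.1.trans h.2), hC.2⟩
  have hA_int : Integrable A P := .of_bound hAm.aestronglyMeasurable C hA_abs
  have hexpA := integrable_exp_mul_of_abs_le hAm.aemeasurable hA_abs t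
  have hchord : ∀ᵐ ω ∂P, exp (t * W ω) ≤ expChord t (A ω) (B ω) (W ω) :=
    hAWB.mono fun ω h => exp_mul_le_expChord h.1 h.2
  have hL : Integrable (fun ω => expChord t (A ω) (B ω) (W ω)) P := by
    refine .of_bound ?_ (exp (|t| * C)) ?_
    · exact hexpA.1.add ((((hBm.const_mul t).exp.sub (hAm.const_mul t).exp).div
        (hBm.sub hAm)).aestronglyMeasurable.mul (hW.1.sub hA_int.1))
    filter_upwards [hAWB, hchord, hA_abs, hB_abs] with ω h hle hA hB
    rw [Real.norm_eq_abs, abs_of_pos ((exp_pos _).trans_le hle)]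
    exact (expChord_le_max h.1 h.2).trans
      (max_le (exp_mul_le_exp_abs_mul hA) (exp_mul_le_exp_abs_mul hB))
  have hexpW : Integrable (fun ω => exp (t * W ω)) P := by
    refine hL.mono' (hW.1.aemeasurable.const_mul t).exp.aestronglyMeasurable ?_
    filter_upwards [hchord] with ω h
    rwa [Real.norm_eq_abs, abs_of_pos (exp_pos _)]
  filter_upwards [condExp_mono (m := G) hexpW hL hchord,
    condExp_expChord hG hW hcond hA hB hA_int hexpA hL,
    ae_nonpos_and_nonneg_of_condExp_eq_zero hG hW hcond hA hB hAWB] with ω hmono heq hsign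
  exact hmono.trans (heq.trans_le (expChord_zero_le hsign.1 hsign.2))

end ConditionalHoeffding

lemma sum_ite_partialSum_le (c : ℕ → ℝ) {e : ℝ} (he : 0 ≤ e) (n : ℕ) :
    ∑ i ∈ Finset.Icc 1 n, (if ∑ j ∈ Finset.Icc 1 i, c j ≤ e then c i else 0) ≤ e := by
  suffices ∀ n, ∑ i ∈ Finset.Icc 1 n, (if ∑ j ∈ Finset.Icc 1 i, c j ≤ e then c i else 0)
      ≤ min (∑ j ∈ Finset.Icc 1 n, c j) e from (this n).trans (min_le_right _ _)
  intro n
  induction n with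
  | zero => simp [he]
  | succ n ih =>
    rw [Finset.sum_Icc_succ_top (by omega), Finset.sum_Icc_succ_top (by omega)]
    have := min_le_left (∑ j ∈ Finset.Icc 1 n, c j) e
    have := min_le_right (∑ j ∈ Finset.Icc 1 n, c j) e
    split_ifs with h
    · exact le_min (by linarith) (by linarith)
    · exact le_min (by linarith) (by linarith)

section Azuma

variable {Ω : Type*} {m₀ : MeasurableSpace Ω} {P : Measure Ω} {ℱ : Filtration ℕ m₀}
  {X A B : ℕ → Ω → ℝ}

noncomputable def azumaExpProcess (t : ℝ) (X A B : ℕ → Ω → ℝ) (m : ℕ) (ω : Ω) : ℝ :=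
  exp (∑ i ∈ Finset.Icc 1 m, (t * X i ω - t ^ 2 * (B i ω - A i ω) ^ 2 / 8))

lemma azumaExpProcess_succ (t : ℝ) (X A B : ℕ → Ω → ℝ) (m : ℕ) (ω : Ω) :
    azumaExpProcess t X A B (m + 1) ω = azumaExpProcess t X A B m ω
      * exp (-(t ^ 2 * (B (m + 1) ω - A (m + 1) ω) ^ 2 / 8)) * exp (t * X (m + 1) ω) := by
  rw [azumaExpProcess, azumaExpProcess, Finset.sum_Icc_succ_top (by omega), exp_add, exp_sub,
    mul_assoc, exp_neg]
  ring

lemma azumaExpProcess_pos (t : ℝ) (X A B : ℕ → Ω → ℝ) (m : ℕ) (ω : Ω) :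
    0 < azumaExpProcess t X A B m ω :=
  exp_pos _

lemma measurable_azumaExpProcess {n : ℕ} (hX : ∀ i ∈ Finset.Icc 1 n, Measurable[ℱ i] (X i))
    (hA : ∀ i ∈ Finset.Icc 1 n, Measurable[ℱ (i - 1)] (A i))
    (hB : ∀ i ∈ Finset.Icc 1 n, Measurable[ℱ (i - 1)] (B i)) (t : ℝ) {m : ℕ} (hm : m ≤ n) :
    Measurable[ℱ m] (azumaExpProcess t X A B m) := by
  refine Measurable.exp (Finset.measurable_sum _ fun i hi => ?_)
  have hi_le : i ≤ m := (Finset.mem_Icc.1 hi).2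
  have hin : i ∈ Finset.Icc 1 n := Finset.Icc_subset_Icc_right hm hi
  have hXm := (hX i hin).mono (ℱ.mono hi_le) le_rfl
  have hAm := (hA i hin).mono (ℱ.mono (by omega : i - 1 ≤ m)) le_rfl
  have hBm := (hB i hin).mono (ℱ.mono (by omega : i - 1 ≤ m)) le_rfl
  exact (hXm.const_mul t).sub ((((hBm.sub hAm).pow_const 2).const_mul _).div_const _)

lemma integrable_azumaExpProcess [IsFiniteMeasure P] {n : ℕ}
    (hX : ∀ i ∈ Finset.Icc 1 n, Measurable[ℱ i] (X i))
    (hA : ∀ i ∈ Finset.Icc 1 n, Measurable[ℱ (i - 1)] (A i))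
    (hB : ∀ i ∈ Finset.Icc 1 n, Measurable[ℱ (i - 1)] (B i))
    (hAXB : ∀ i ∈ Finset.Icc 1 n, ∀ᵐ ω ∂P, A i ω ≤ X i ω ∧ X i ω ≤ B i ω)
    {C : ℝ} (hC : ∀ i ∈ Finset.Icc 1 n, ∀ᵐ ω ∂P, -C ≤ A i ω ∧ B i ω ≤ C) (t : ℝ)
    {m : ℕ} (hm : m ≤ n) :
    Integrable (azumaExpProcess t X A B m) P := by
  refine .of_bound ((measurable_azumaExpProcess hX hA hB t hm).mono (ℱ.le m) le_rfl
    ).aestronglyMeasurable (exp (m * (|t| * C))) ?_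
  have hbound : ∀ᵐ ω ∂P, ∀ i ∈ Finset.Icc 1 m, |X i ω| ≤ C := by
    rw [Filter.eventually_all_finset]
    intro i hi
    have hin : i ∈ Finset.Icc 1 n := Finset.Icc_subset_Icc_right hm hi
    filter_upwards [hAXB i hin, hC i hin] with ω h hC
    exact abs_le.2 ⟨hC.1.trans h.1, h.2.trans hC.2⟩
  filter_upwards [hbound] with ω hω
  rw [Real.norm_eq_abs, abs_of_pos (azumaExpProcess_pos _ _ _ _ _ _), azumaExpProcess]
  refine exp_le_exp.2 ?_
  calc _ ≤ ∑ _i ∈ Finset.Icc 1 m, |t| * C := Finset.sum_le_sum fun i hi => by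
        have := exp_le_exp.1 (exp_mul_le_exp_abs_mul (t := t) (hω i hi))
        have : 0 ≤ t ^ 2 * (B i ω - A i ω) ^ 2 / 8 := by positivity
        linarith
    _ = m * (|t| * C) := by simp

lemma integral_azumaExpProcess_le_one [IsProbabilityMeasure P] {n : ℕ}
    (hX : ∀ i ∈ Finset.Icc 1 n, Measurable[ℱ i] (X i))
    (hA : ∀ i ∈ Finset.Icc 1 n, Measurable[ℱ (i - 1)] (A i))
    (hB : ∀ i ∈ Finset.Icc 1 n, Measurable[ℱ (i - 1)] (B i))
    (hXint : ∀ i ∈ Finset.Icc 1 n, Integrable (X i) P)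
    (hcond : ∀ i ∈ Finset.Icc 1 n, P[X i | ℱ (i - 1)] =ᵐ[P] 0)
    (hAXB : ∀ i ∈ Finset.Icc 1 n, ∀ᵐ ω ∂P, A i ω ≤ X i ω ∧ X i ω ≤ B i ω)
    {C : ℝ} (hC : ∀ i ∈ Finset.Icc 1 n, ∀ᵐ ω ∂P, -C ≤ A i ω ∧ B i ω ≤ C) (t : ℝ) :
    ∫ ω, azumaExpProcess t X A B n ω ∂P ≤ 1 := by
  suffices ∀ m ≤ n, ∫ ω, azumaExpProcess t X A B m ω ∂P ≤ 1 from this n le_rfl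
  intro m hm
  induction m with
  | zero => simp [azumaExpProcess]
  | succ m ih =>
    have hmem : m + 1 ∈ Finset.Icc 1 n := Finset.mem_Icc.2 ⟨by omega, hm⟩
    set F : Ω → ℝ := fun ω =>
      azumaExpProcess t X A B m ω * exp (-(t ^ 2 * (B (m + 1) ω - A (m + 1) ω) ^ 2 / 8))
    have hF : StronglyMeasurable[ℱ m] F :=
      ((measurable_azumaExpProcess hX hA hB t (by omega)).mul
        ((((hB _ hmem).sub (hA _ hmem)).pow_const 2).const_mul _ |>.div_const _).neg.exp
        ).stronglyMeasurable
    have hF_succ : F * (fun ω => exp (t * X (m + 1) ω)) = azumaExpProcess t X A B (m + 1) := by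
      ext ω; simp [F, azumaExpProcess_succ]
    have hF_cancel : F * (fun ω => exp (t ^ 2 * (B (m + 1) ω - A (m + 1) ω) ^ 2 / 8))
        = azumaExpProcess t X A B m := by
      ext ω; simp [F, mul_assoc, ← exp_add]
    have hexpX : Integrable (fun ω => exp (t * X (m + 1) ω)) P := by
      refine integrable_exp_mul_of_abs_le (C := C) (hXint _ hmem).1.aemeasurable ?_ t
      filter_upwards [hAXB _ hmem, hC _ hmem] with ω h hC
      exact abs_le.2 ⟨hC.1.trans h.1, h.2.trans hC.2⟩
    calc ∫ ω, azumaExpProcess t X A B (m + 1) ω ∂P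
        = ∫ ω, F ω * exp (t * X (m + 1) ω) ∂P := by rw [← hF_succ]; rfl
      _ ≤ ∫ ω, F ω * exp (t ^ 2 * (B (m + 1) ω - A (m + 1) ω) ^ 2 / 8) ∂P :=
        integral_mul_le_of_condExp_le (ℱ.le m) hF
          (fun ω => (mul_pos (azumaExpProcess_pos _ _ _ _ _ _) (exp_pos _)).le) hexpX
          (hF_succ ▸ integrable_azumaExpProcess hX hA hB hAXB hC t hm)
          (hF_cancel ▸ integrable_azumaExpProcess hX hA hB hAXB hC t (by omega))
          (condExp_exp_mul_le (ℱ.le m) (hXint _ hmem) (hcond _ hmem) (hA _ hmem) (hB _ hmem)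
            (hAXB _ hmem) (hC _ hmem) t)
      _ = ∫ ω, azumaExpProcess t X A B m ω ∂P := by rw [← hF_cancel]; rfl
      _ ≤ 1 := ih (by omega)

lemma ae_abs_bounds_of_sum_sq_le [IsFiniteMeasure P] {n : ℕ}
    (hA : ∀ i ∈ Finset.Icc 1 n, Measurable[ℱ (i - 1)] (A i))
    (hB : ∀ i ∈ Finset.Icc 1 n, Measurable[ℱ (i - 1)] (B i))
    (hXint : ∀ i ∈ Finset.Icc 1 n, Integrable (X i) P)
    (hcond : ∀ i ∈ Finset.Icc 1 n, P[X i | ℱ (i - 1)] =ᵐ[P] 0)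
    (hAXB : ∀ i ∈ Finset.Icc 1 n, ∀ᵐ ω ∂P, A i ω ≤ X i ω ∧ X i ω ≤ B i ω)
    {c : ℝ} (hsum : ∀ᵐ ω ∂P, ∑ i ∈ Finset.Icc 1 n, (B i ω - A i ω) ^ 2 ≤ c ^ 2) :
    ∀ i ∈ Finset.Icc 1 n, ∀ᵐ ω ∂P, -|c| ≤ A i ω ∧ B i ω ≤ |c| := by
  intro i hi
  filter_upwards [hsum, ae_nonpos_and_nonneg_of_condExp_eq_zero (ℱ.le _) (hXint i hi)
    (hcond i hi) (hA i hi) (hB i hi) (hAXB i hi)] with ω hs hsign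
  have hsq : (B i ω - A i ω) ^ 2 ≤ c ^ 2 :=
    (Finset.single_le_sum (f := fun j => (B j ω - A j ω) ^ 2) (fun _ _ => sq_nonneg _) hi).trans hs
  have hrange : B i ω - A i ω ≤ |c| := (le_abs_self _).trans (sq_le_sq.1 hsq)
  exact ⟨by linarith [hsign.2], by linarith [hsign.1]⟩

theorem hasSubgaussianMGF_sum_of_sum_sq_le [IsProbabilityMeasure P] {n : ℕ}
    (hX : ∀ i ∈ Finset.Icc 1 n, Measurable[ℱ i] (X i))
    (hA : ∀ i ∈ Finset.Icc 1 n, Measurable[ℱ (i - 1)] (A i))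
    (hB : ∀ i ∈ Finset.Icc 1 n, Measurable[ℱ (i - 1)] (B i))
    (hXint : ∀ i ∈ Finset.Icc 1 n, Integrable (X i) P)
    (hcond : ∀ i ∈ Finset.Icc 1 n, P[X i | ℱ (i - 1)] =ᵐ[P] 0)
    (hAXB : ∀ i ∈ Finset.Icc 1 n, ∀ᵐ ω ∂P, A i ω ≤ X i ω ∧ X i ω ≤ B i ω)
    {c : ℝ} (hsum : ∀ᵐ ω ∂P, ∑ i ∈ Finset.Icc 1 n, (B i ω - A i ω) ^ 2 ≤ c ^ 2) :
    HasSubgaussianMGF (fun ω => ∑ i ∈ Finset.Icc 1 n, X i ω) ((‖c‖₊ / 2) ^ 2) P := by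
  have hC := ae_abs_bounds_of_sum_sq_le hA hB hXint hcond hAXB hsum
  have hM t := integrable_azumaExpProcess hX hA hB hAXB hC t le_rfl
  have hsum_le (t : ℝ) : ∀ᵐ ω ∂P, exp (t * ∑ i ∈ Finset.Icc 1 n, X i ω)
      ≤ azumaExpProcess t X A B n ω * exp (t ^ 2 * c ^ 2 / 8) := by
    filter_upwards [hsum] with ω hs
    rw [azumaExpProcess, ← exp_add, exp_le_exp, Finset.sum_sub_distrib, ← Finset.mul_sum,
      ← Finset.sum_div, ← Finset.mul_sum]
    have : t ^ 2 * ∑ i ∈ Finset.Icc 1 n, (B i ω - A i ω) ^ 2 ≤ t ^ 2 * c ^ 2 :=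
      mul_le_mul_of_nonneg_left hs (sq_nonneg t)
    linarith
  have hint (t : ℝ) : Integrable (fun ω => exp (t * ∑ i ∈ Finset.Icc 1 n, X i ω)) P := by
    refine ((hM t).mul_const (exp (t ^ 2 * c ^ 2 / 8))).mono' ?_ ?_
    · exact ((Finset.aemeasurable_fun_sum _ fun i hi => (hXint i hi).1.aemeasurable).const_mul t
        ).exp.aestronglyMeasurable
    · filter_upwards [hsum_le t] with ω h
      rwa [Real.norm_eq_abs, abs_of_pos (exp_pos _)]
  refine ⟨hint, fun t => ?_⟩
  calc mgf (fun ω => ∑ i ∈ Finset.Icc 1 n, X i ω) P t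
      ≤ ∫ ω, azumaExpProcess t X A B n ω * exp (t ^ 2 * c ^ 2 / 8) ∂P :=
        integral_mono_ae (hint t) ((hM t).mul_const _) (hsum_le t)
    _ ≤ 1 * exp (t ^ 2 * c ^ 2 / 8) := by
        rw [integral_mul_const]
        gcongr
        exact integral_azumaExpProcess_le_one hX hA hB hXint hcond hAXB hC t
    _ = _ := by rw [one_mul, coe_nnnorm_div_two_sq]; congr 1; ring

lemma measurableSet_sum_sq_le {n : ℕ}
    (hA : ∀ i ∈ Finset.Icc 1 n, Measurable[ℱ (i - 1)] (A i))
    (hB : ∀ i ∈ Finset.Icc 1 n, Measurable[ℱ (i - 1)] (B i)) (e : ℝ) :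
    ∀ i ∈ Finset.Icc 1 n,
      MeasurableSet[ℱ (i - 1)] {ω | ∑ j ∈ Finset.Icc 1 i, (B j ω - A j ω) ^ 2 ≤ e} := by
  intro i hi
  refine measurableSet_le (Finset.measurable_sum _ fun j hj => ?_) measurable_const
  have hjn : j ∈ Finset.Icc 1 n := Finset.Icc_subset_Icc_right (Finset.mem_Icc.1 hi).2 hj
  have hle : ℱ (j - 1) ≤ ℱ (i - 1) := ℱ.mono (by have := (Finset.mem_Icc.1 hj).2; omega)
  exact (((hB j hjn).mono hle le_rfl).sub ((hA j hjn).mono hle le_rfl)).pow_const 2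

theorem measure_sum_ge_and_sum_sq_le_le [IsProbabilityMeasure P] {n : ℕ}
    (hX : ∀ i ∈ Finset.Icc 1 n, Measurable[ℱ i] (X i))
    (hA : ∀ i ∈ Finset.Icc 1 n, Measurable[ℱ (i - 1)] (A i))
    (hB : ∀ i ∈ Finset.Icc 1 n, Measurable[ℱ (i - 1)] (B i))
    (hXint : ∀ i ∈ Finset.Icc 1 n, Integrable (X i) P)
    (hcond : ∀ i ∈ Finset.Icc 1 n, P[X i | ℱ (i - 1)] =ᵐ[P] 0)
    (hAXB : ∀ i ∈ Finset.Icc 1 n, ∀ᵐ ω ∂P, A i ω ≤ X i ω ∧ X i ω ≤ B i ω)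
    {ε₁ ε₂ : ℝ} (hε₁ : 0 ≤ ε₁) :
    P {ω | ε₁ ≤ ∑ i ∈ Finset.Icc 1 n, X i ω
        ∧ ∑ i ∈ Finset.Icc 1 n, (B i ω - A i ω) ^ 2 ≤ ε₂ ^ 2}
      ≤ ENNReal.ofReal (exp (-2 * (ε₁ / ε₂) ^ 2)) := by
  set S : ℕ → Set Ω := fun i => {ω | ∑ j ∈ Finset.Icc 1 i, (B j ω - A j ω) ^ 2 ≤ ε₂ ^ 2}
  have hS : ∀ i ∈ Finset.Icc 1 n, MeasurableSet[ℱ (i - 1)] (S i) :=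
    measurableSet_sum_sq_le hA hB (ε₂ ^ 2)
  have hsum : ∀ ω, ∑ i ∈ Finset.Icc 1 n,
      ((S i).indicator (B i) ω - (S i).indicator (A i) ω) ^ 2 ≤ ε₂ ^ 2 := by
    intro ω
    refine le_trans (le_of_eq (Finset.sum_congr rfl fun i _ => ?_))
      (sum_ite_partialSum_le (fun i => (B i ω - A i ω) ^ 2) (sq_nonneg ε₂) n)
    by_cases h : ω ∈ S i <;> simp_all [S]
  have hevent : {ω | ε₁ ≤ ∑ i ∈ Finset.Icc 1 n, X i ω
      ∧ ∑ i ∈ Finset.Icc 1 n, (B i ω - A i ω) ^ 2 ≤ ε₂ ^ 2}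
      ⊆ {ω | ε₁ ≤ ∑ i ∈ Finset.Icc 1 n, (S i).indicator (X i) ω} := by
    intro ω hω
    have hmem : ∀ i ∈ Finset.Icc 1 n, ω ∈ S i := fun i hi =>
      (Finset.sum_le_sum_of_subset_of_nonneg
        (Finset.Icc_subset_Icc_right (Finset.mem_Icc.1 hi).2) fun _ _ _ => sq_nonneg _).trans hω.2
    simpa [Finset.sum_congr rfl fun i hi => Set.indicator_of_mem (hmem i hi) (X i)] using hω.1
  have hsubG := hasSubgaussianMGF_sum_of_sum_sq_le
    (X := fun i => (S i).indicator (X i)) (A := fun i => (S i).indicator (A i))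
    (B := fun i => (S i).indicator (B i))
    (fun i hi => (hX i hi).indicator (ℱ.mono (Nat.sub_le i 1) _ (hS i hi)))
    (fun i hi => (hA i hi).indicator (hS i hi)) (fun i hi => (hB i hi).indicator (hS i hi))
    (fun i hi => (hXint i hi).indicator (ℱ.le _ _ (hS i hi)))
    (fun i hi => (condExp_indicator (hXint i hi) (hS i hi)).trans
      (((hcond i hi).indicator).trans (by simp)))
    (fun i hi => (hAXB i hi).mono fun ω h => by by_cases hω : ω ∈ S i <;> simp [hω, h])
    (.of_forall hsum)
  have hexponent : -ε₁ ^ 2 / (2 * (((‖ε₂‖₊ / 2) ^ 2 : NNReal) : ℝ)) = -2 * (ε₁ / ε₂) ^ 2 := by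
    rw [coe_nnnorm_div_two_sq]
    rcases eq_or_ne ε₂ 0 with rfl | hε₂
    · simp
    · field_simp; ring
  refine (measure_mono hevent).trans ?_
  rw [← ofReal_measureReal, ← hexponent]
  exact ENNReal.ofReal_le_ofReal (hsubG.measure_ge_le hε₁)

end Azuma

def Filtration.ofMonotoneUpTo {Ω : Type*} {m₀ : MeasurableSpace Ω} (f : ℕ → MeasurableSpace Ω)
    (k : ℕ) (hmono : ∀ i j, i ≤ j → j ≤ k → f i ≤ f j) (hfk : f k = m₀) : Filtration ℕ m₀ where
  seq i := f (min i k)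
  mono' _ _ hij := hmono _ _ (min_le_min_right k hij) (min_le_right _ _)
  le' i := hfk ▸ hmono _ _ (min_le_right i k) le_rfl

lemma Filtration.ofMonotoneUpTo_apply {Ω : Type*} {m₀ : MeasurableSpace Ω}
    {f : ℕ → MeasurableSpace Ω} {k : ℕ} {hmono : ∀ i j, i ≤ j → j ≤ k → f i ≤ f j}
    {hfk : f k = m₀} {i : ℕ} (hi : i ≤ k) : Filtration.ofMonotoneUpTo f k hmono hfk i = f i :=
  congrArg f (min_eq_left hi)

theorem azuma_dynamic_bounds_general
    {Ω : Type*} {m₀ : MeasurableSpace Ω} (P : Measure Ω) [IsProbabilityMeasure P]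
    (k : ℕ) (f : ℕ → MeasurableSpace Ω)
    (hfk : f k = m₀)
    (hmono : ∀ i j, i ≤ j → j ≤ k → f i ≤ f j)
    (X A B : ℕ → Ω → ℝ)
    (hXmeas : ∀ i ∈ Finset.Icc 1 k, Measurable[f i] (X i))
    (hAmeas : ∀ i ∈ Finset.Icc 1 k, Measurable[f (i - 1)] (A i))
    (hBmeas : ∀ i ∈ Finset.Icc 1 k, Measurable[f (i - 1)] (B i))
    (hXint : ∀ i ∈ Finset.Icc 1 k, Integrable (X i) P)
    (hcond : ∀ i ∈ Finset.Icc 1 k, P[X i | f (i - 1)] =ᵐ[P] 0)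
    (hbnd : ∀ i ∈ Finset.Icc 1 k, ∀ᵐ ω ∂P, A i ω ≤ X i ω ∧ X i ω ≤ B i ω)
    (ε₁ ε₂ : ℝ) (hε₁ : 0 < ε₁) :
    P {ω | ε₁ ≤ ∑ i ∈ Finset.Icc 1 k, X i ω
        ∧ ∑ i ∈ Finset.Icc 1 k, (B i ω - A i ω) ^ 2 ≤ ε₂ ^ 2}
      ≤ ENNReal.ofReal (Real.exp (-2 * (ε₁ / ε₂) ^ 2)) := by
  set ℱ := Filtration.ofMonotoneUpTo f k hmono hfk
  have hℱ : ∀ i ∈ Finset.Icc 1 k, ℱ i = f i ∧ ℱ (i - 1) = f (i - 1) := fun i hi =>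
    ⟨Filtration.ofMonotoneUpTo_apply (Finset.mem_Icc.1 hi).2,
      Filtration.ofMonotoneUpTo_apply ((Nat.sub_le i 1).trans (Finset.mem_Icc.1 hi).2)⟩
  refine measure_sum_ge_and_sum_sq_le_le (ℱ := ℱ) (fun i hi => ?_) (fun i hi => ?_)
    (fun i hi => ?_) hXint (fun i hi => ?_) hbnd hε₁.le
  · rw [(hℱ i hi).1]; exact hXmeas i hi
  · rw [(hℱ i hi).2]; exact hAmeas i hi
  · rw [(hℱ i hi).2]; exact hBmeas i hi
  · rw [(hℱ i hi).2]; exact hcond i hi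

/-- **Azuma inequality extension for dynamic bounds** (Lemma D.5).
For a martingale-difference sequence `X_i` with predictable bounds `A_i ≤ X_i ≤ B_i`,
`P(∑ X_i ≥ ε₁ and ∑ (B_i − A_i)² ≤ ε₂²) ≤ exp(−2(ε₁/ε₂)²)`. -/
theorem azuma_dynamic_bounds
    {Ω : Type*} {m₀ : MeasurableSpace Ω} (P : Measure Ω) [IsProbabilityMeasure P]
    (k : ℕ) (f : ℕ → MeasurableSpace Ω)
    (hf0 : f 0 = ⊥) (hfk : f k = m₀)
    (hmono : ∀ i j, i ≤ j → j ≤ k → f i ≤ f j)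
    (X A B : ℕ → Ω → ℝ)
    (hXmeas : ∀ i ∈ Finset.Icc 1 k, Measurable[f i] (X i))
    (hAmeas : ∀ i ∈ Finset.Icc 1 k, Measurable[f (i - 1)] (A i))
    (hBmeas : ∀ i ∈ Finset.Icc 1 k, Measurable[f (i - 1)] (B i))
    (hXint : ∀ i ∈ Finset.Icc 1 k, Integrable (X i) P)
    (hcond : ∀ i ∈ Finset.Icc 1 k, P[X i | f (i - 1)] =ᵐ[P] 0)
    (hbnd : ∀ i ∈ Finset.Icc 1 k, ∀ᵐ ω ∂P, A i ω ≤ X i ω ∧ X i ω ≤ B i ω)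
    (ε₁ ε₂ : ℝ) (hε₁ : 0 < ε₁) (hε₂ : 0 < ε₂) :
    P {ω | ε₁ ≤ ∑ i ∈ Finset.Icc 1 k, X i ω
        ∧ ∑ i ∈ Finset.Icc 1 k, (B i ω - A i ω) ^ 2 ≤ ε₂ ^ 2}
      ≤ ENNReal.ofReal (Real.exp (-2 * (ε₁ / ε₂) ^ 2)) :=
  azuma_dynamic_bounds_general P k f hfk hmono X A B hXmeas hAmeas hBmeas hXint hcond hbnd ε₁ ε₂ hε₁
end

section
/- Let η > 0, let a, b ∈ ℝ, and let 0 < δ ≤ 1. Let γ_a and γ_b denote the Gaussian probability measures on ℝ with means a and b respectively and common variance η². Then for every measurable set S ⊆ ℝ, γ_a(S) ≤ exp( (|a−b|/η)·√(2·ln(1/δ)) + (a−b)²/(2η²) )·γ_b(S) + δ. -/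
/-!
The density ratio `dγ_a/dγ_b (x)` is `exp L(x)` with the privacy loss
`L(x) = ((x - b)² - (x - a)²) / (2η²) = (a - b)(x - a)/η² + (a - b)²/(2η²)`.
Split `S` according to whether `L ≤ ε`, with `ε` the exponent in the bound and
`t = √(2 ln(1/δ))`. Where it holds, `γ_a ≤ e^ε γ_b` pointwise on densities.
The remaining set is a one-sided tail `{η t |a - b| < (a - b)(x - a)}` of `γ_a`, whose mass is at
most `exp(-t²/2) = δ` by the Chernoff bound for the sub-Gaussian variable `(a - b)(x - a)`.
-/

open MeasureTheory ProbabilityTheory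
open scoped NNReal ENNReal

namespace ProbabilityTheory

lemma gaussianPDFReal_eq_exp_mul_gaussianPDFReal (a b : ℝ) (v : ℝ≥0) (x : ℝ) :
    gaussianPDFReal a v x
      = Real.exp (((x - b) ^ 2 - (x - a) ^ 2) / (2 * v)) * gaussianPDFReal b v x := by
  rw [gaussianPDFReal, gaussianPDFReal, mul_left_comm, ← Real.exp_add]
  ring_nf

lemma gaussianReal_le_ofReal_mul_gaussianReal {a b c : ℝ} {v : ℝ≥0} (hv : v ≠ 0) {U : Set ℝ}
    (h : ∀ x ∈ U, gaussianPDFReal a v x ≤ c * gaussianPDFReal b v x) :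
    gaussianReal a v U ≤ ENNReal.ofReal c * gaussianReal b v U := by
  rw [gaussianReal_apply _ hv, gaussianReal_apply _ hv,
    ← lintegral_const_mul _ (measurable_gaussianPDF _ _)]
  refine setLIntegral_mono ((measurable_gaussianPDF _ _).const_mul _) fun x hx ↦ ?_
  rw [gaussianPDF_def, gaussianPDF_def, ← ENNReal.ofReal_mul' (gaussianPDFReal_nonneg _ _ _)]
  exact ENNReal.ofReal_le_ofReal (h x hx)

lemma hasSubgaussianMGF_sub_gaussianReal (m : ℝ) (v : ℝ≥0) :
    HasSubgaussianMGF (fun x ↦ x - m) v (gaussianReal m v) := by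
  have hmgf (t : ℝ) : mgf (fun x ↦ x - m) (gaussianReal m v) t = Real.exp (v * t ^ 2 / 2) := by
    rw [mgf_gaussianReal (gaussianReal_map_sub_const m), sub_self, zero_mul, zero_add]
  exact ⟨fun t ↦ mgf_pos_iff.mp (hmgf t ▸ Real.exp_pos _), fun t ↦ (hmgf t).le⟩

lemma gaussianReal_setOf_mul_abs_lt_mul_sub_le (m : ℝ) (v : ℝ≥0) {r : ℝ} (hr : 0 ≤ r) (d : ℝ) :
    gaussianReal m v {x | r * |d| < d * (x - m)} ≤ ENNReal.ofReal (Real.exp (-r ^ 2 / (2 * v))) := by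
  rcases eq_or_ne d 0 with rfl | hd
  · simp
  have hchernoff := ((hasSubgaussianMGF_sub_gaussianReal m v).const_mul d).measure_ge_le
    (mul_nonneg hr (abs_nonneg d))
  calc gaussianReal m v {x | r * |d| < d * (x - m)}
      ≤ gaussianReal m v {x | r * |d| ≤ d * (x - m)} :=
        measure_mono (Set.ofPred_subset_ofPred.mpr fun _ ↦ le_of_lt)
    _ = ENNReal.ofReal ((gaussianReal m v).real {x | r * |d| ≤ d * (x - m)}) :=
        (ofReal_measureReal).symm
    _ ≤ ENNReal.ofReal (Real.exp (-r ^ 2 / (2 * v))) := by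
        refine ENNReal.ofReal_le_ofReal (hchernoff.trans_eq ?_)
        congr 1
        change _ / (2 * (d ^ 2 * (v : ℝ))) = _
        rw [mul_pow, sq_abs]
        field_simp

end ProbabilityTheory

lemma sq_sub_sq_div_two_mul_sq_le {a b x η t : ℝ} (hη : 0 < η)
    (h : (a - b) * (x - a) ≤ η * t * |a - b|) :
    ((x - b) ^ 2 - (x - a) ^ 2) / (2 * η ^ 2) ≤ |a - b| / η * t + (a - b) ^ 2 / (2 * η ^ 2) := by
  have hsplit : ((x - b) ^ 2 - (x - a) ^ 2) / (2 * η ^ 2)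
      = (a - b) * (x - a) / η ^ 2 + (a - b) ^ 2 / (2 * η ^ 2) := by
    field_simp
    ring
  have hbound : η * t * |a - b| / η ^ 2 = |a - b| / η * t := by
    field_simp
  rw [hsplit, ← hbound]
  gcongr

theorem gaussian_mechanism_indistinguishable_general
    (η : ℝ) (hη : 0 < η) (a b : ℝ) (δ : ℝ) (hδ0 : 0 < δ) (hδ1 : δ ≤ 1)
    (S : Set ℝ) :
    gaussianReal a ⟨η ^ 2, sq_nonneg η⟩ S
      ≤ ENNReal.ofReal
          (Real.exp ((|a - b| / η) * Real.sqrt (2 * Real.log (1 / δ))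
            + (a - b) ^ 2 / (2 * η ^ 2))) *
        gaussianReal b ⟨η ^ 2, sq_nonneg η⟩ S + ENNReal.ofReal δ := by
  set v : ℝ≥0 := ⟨η ^ 2, sq_nonneg η⟩
  set t := Real.sqrt (2 * Real.log (1 / δ))
  have hv : v ≠ 0 := (NNReal.coe_pos.mp (show (0 : ℝ) < v from pow_pos hη 2)).ne'
  have ht : t ^ 2 = 2 * Real.log (1 / δ) :=
    Real.sq_sqrt (mul_nonneg zero_le_two (Real.log_nonneg (one_le_one_div hδ0 hδ1)))
  set T := {x : ℝ | η * t * |a - b| < (a - b) * (x - a)}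
  have htail : gaussianReal a v T ≤ ENNReal.ofReal δ := by
    refine (gaussianReal_setOf_mul_abs_lt_mul_sub_le a v
      (mul_nonneg hη.le (Real.sqrt_nonneg _)) (a - b)).trans_eq ?_
    have hexponent : -(η * t) ^ 2 / (2 * η ^ 2) = Real.log δ := by
      rw [mul_pow, ht, one_div, Real.log_inv]
      field_simp
    change ENNReal.ofReal (Real.exp (-(η * t) ^ 2 / (2 * η ^ 2))) = _
    rw [hexponent, Real.exp_log hδ0]
  have hgood : gaussianReal a v (S \ T) ≤
      ENNReal.ofReal (Real.exp (|a - b| / η * t + (a - b) ^ 2 / (2 * η ^ 2))) *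
        gaussianReal b v (S \ T) :=
    gaussianReal_le_ofReal_mul_gaussianReal hv fun x hx ↦ by
      rw [gaussianPDFReal_eq_exp_mul_gaussianPDFReal a b]
      refine mul_le_mul_of_nonneg_right (Real.exp_le_exp.mpr ?_) (gaussianPDFReal_nonneg _ _ _)
      exact sq_sub_sq_div_two_mul_sq_le hη (not_lt.mp hx.2)
  calc gaussianReal a v S ≤ gaussianReal a v (S ∩ T) + gaussianReal a v (S \ T) :=
        measure_le_inter_add_sdiff _ _ _
    _ ≤ ENNReal.ofReal δ + ENNReal.ofReal (Real.exp (|a - b| / η * t + (a - b) ^ 2 / (2 * η ^ 2)))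
          * gaussianReal b v S :=
        add_le_add ((measure_mono Set.inter_subset_right).trans htail)
          (hgood.trans (by gcongr; exact Set.sdiff_subset))
    _ = _ := add_comm _ _

/-- **Gaussian mechanism is LBI** (core of Lemma 4.7).
For Gaussian measures `γ_a, γ_b` with means `a, b` and common variance `η²`, and every
`0 < δ ≤ 1`, every measurable set `S` satisfies
`γ_a(S) ≤ exp((|a−b|/η)·√(2 ln(1/δ)) + (a−b)²/(2η²))·γ_b(S) + δ`. -/
theorem gaussian_mechanism_indistinguishable
    (η : ℝ) (hη : 0 < η) (a b : ℝ) (δ : ℝ) (hδ0 : 0 < δ) (hδ1 : δ ≤ 1)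
    (S : Set ℝ) (hS : MeasurableSet S) :
    gaussianReal a ⟨η ^ 2, sq_nonneg η⟩ S
      ≤ ENNReal.ofReal
          (Real.exp ((|a - b| / η) * Real.sqrt (2 * Real.log (1 / δ))
            + (a - b) ^ 2 / (2 * η ^ 2))) *
        gaussianReal b ⟨η ^ 2, sq_nonneg η⟩ S + ENNReal.ofReal δ :=
  gaussian_mechanism_indistinguishable_general η hη a b δ hδ0 hδ1 S
end
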